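/- arXiv:1006.3703 — 9 statements merged into one kernel-verified Lean document; each statement's English description precedes it below -/
import Mathlib

section
/- For each starting point u in X, there exists v in X such that (i) d(u,v) ≤ φ(u) − φ(v), and (ii) for every x ≠ v, d(v,x) > φ(v) − φ(x). -/
/-!
Write `S y = {x | φ x + d(x, y) ≤ φ y}`; these sets are closed (φ is lower semicontinuous) and
`x ∈ S y` implies `S x ⊆ S y`. Starting from `u`, pick `y (n+1) ∈ S (y n)` with `φ (y (n+1))`
within `εₙ` of `inf φ` on `S (y n)`. Every `z ∈ S (y (n+1))` then satisfies
`d(z, y (n+1)) ≤ φ (y (n+1)) - φ z < εₙ`, so the nested closed sets `S (y n)` shrink to a single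
point `v` by Cantor's intersection theorem. This `v` lies in `S u`, and `S v ⊆ S (y n)` for all
`n` forces `S v = {v}`, which is the strict inequality.
-/

open Metric Set Filter Topology

namespace Ekeland

section PseudoMetric

variable {X : Type*} [PseudoMetricSpace X] {φ : X → ℝ}

def ekelandSet (φ : X → ℝ) (y : X) : Set X := {x | φ x + dist x y ≤ φ y}

theorem mem_ekelandSet {x y : X} : x ∈ ekelandSet φ y ↔ φ x + dist x y ≤ φ y := Iff.rfl

theorem mem_ekelandSet_self (y : X) : y ∈ ekelandSet φ y := by
  simp [ekelandSet]

theorem ekelandSet_subset_of_mem {x y : X} (h : x ∈ ekelandSet φ y) :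
    ekelandSet φ x ⊆ ekelandSet φ y := fun z hz => by
  rw [mem_ekelandSet] at h hz ⊢
  linarith [dist_triangle z x y]

theorem isClosed_ekelandSet (hφ : LowerSemicontinuous φ) (y : X) :
    IsClosed (ekelandSet φ y) :=
  (hφ.add (continuous_id.dist continuous_const).lowerSemicontinuous).isClosed_preimage (φ y)

theorem exists_mem_ekelandSet_forall_lt_add (hφ : BddBelow (range φ)) (y : X) {ε : ℝ}
    (hε : 0 < ε) : ∃ x ∈ ekelandSet φ y, ∀ z ∈ ekelandSet φ y, φ x < φ z + ε := by
  obtain ⟨_, ⟨x, hx, rfl⟩, hlt⟩ :=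
    Real.lt_sInf_add_pos ⟨φ y, y, mem_ekelandSet_self y, rfl⟩ hε (s := φ '' ekelandSet φ y)
  refine ⟨x, hx, fun z hz => hlt.trans_le ?_⟩
  gcongr
  exact csInf_le (hφ.mono (image_subset_range _ _)) (mem_image_of_mem φ hz)

theorem ekelandSet_subset_ball {x y : X} {ε : ℝ} (hx : x ∈ ekelandSet φ y)
    (hmin : ∀ z ∈ ekelandSet φ y, φ x < φ z + ε) : ekelandSet φ x ⊆ ball x ε := fun z hz => by
  have hφz := hmin z (ekelandSet_subset_of_mem hx hz)
  rw [mem_ekelandSet] at hz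
  rw [mem_ball]
  linarith

theorem exists_seq_ekelandSet_subset_ball (hφ : BddBelow (range φ)) (u : X) {ε : ℕ → ℝ}
    (hε : ∀ n, 0 < ε n) : ∃ y : ℕ → X, y 0 = u ∧
      ∀ n, y (n + 1) ∈ ekelandSet φ (y n) ∧ ekelandSet φ (y (n + 1)) ⊆ ball (y (n + 1)) (ε n) := by
  choose next hnext hmin using fun (x : X) n => exists_mem_ekelandSet_forall_lt_add hφ x (hε n)
  exact ⟨fun n => Nat.rec u (fun n x => next x n) n, rfl,
    fun n => ⟨hnext _ n, ekelandSet_subset_ball (hnext _ n) (hmin _ n)⟩⟩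

end PseudoMetric

theorem exists_ekelandSet_eq_singleton {X : Type*} [MetricSpace X] [CompleteSpace X]
    {φ : X → ℝ} (hφ : LowerSemicontinuous φ) (hbdd : BddBelow (range φ)) (u : X) :
    ∃ v ∈ ekelandSet φ u, ekelandSet φ v = {v} := by
  obtain ⟨y, rfl, hy⟩ := exists_seq_ekelandSet_subset_ball hbdd u
    (ε := fun n : ℕ => 1 / (n + 1)) (fun n => Nat.one_div_pos_of_nat)
  set s : ℕ → Set X := fun n => ekelandSet φ (y (n + 1))
  have hanti : Antitone s := antitone_nat_of_succ_le fun n => ekelandSet_subset_of_mem (hy _).1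
  have hbdd : ∀ n, Bornology.IsBounded (s n) := fun n => isBounded_ball.subset (hy n).2
  have hdiam : Tendsto (fun n => diam (s n)) atTop (𝓝 0) := by
    refine squeeze_zero (g := fun n : ℕ => 2 * (1 / ((n : ℝ) + 1))) (fun n => diam_nonneg)
      (fun n => (diam_mono (hy n).2 isBounded_ball).trans (diam_ball Nat.one_div_pos_of_nat.le)) ?_
    simpa using (tendsto_one_div_add_atTop_nhds_zero_nat (𝕜 := ℝ)).const_mul 2
  obtain ⟨v, hv⟩ := nonempty_iInter_of_nonempty_biInter
    (fun n => isClosed_ekelandSet hφ _) hbdd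
    (fun N => ⟨y (N + 1), mem_iInter₂.2 fun n hn => hanti hn (mem_ekelandSet_self _)⟩) hdiam
  rw [mem_iInter] at hv
  refine ⟨v, ekelandSet_subset_of_mem (hy 0).1 (hv 0), ?_⟩
  refine Subset.antisymm (fun x hx => ?_) (singleton_subset_iff.2 (mem_ekelandSet_self v))
  have hxs : ∀ n, x ∈ s n := fun n => ekelandSet_subset_of_mem (hv n) hx
  exact dist_le_zero.1 <| ge_of_tendsto' hdiam fun n => dist_le_diam_of_mem (hbdd n) (hxs n) (hv n)

end Ekeland

open Ekeland in
/-- Ekeland's variational principle with nonnegative lower semicontinuous φ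
on a complete metric space. -/
theorem stmt_0 {X : Type*} [MetricSpace X] [CompleteSpace X]
    (φ : X → ℝ) (hφ0 : ∀ x, 0 ≤ φ x) (hlsc : LowerSemicontinuous φ)
    (u : X) :
    ∃ v : X, dist u v ≤ φ u - φ v ∧ ∀ x : X, x ≠ v → dist v x > φ v - φ x := by
  obtain ⟨v, hvu, hv⟩ :=
    exists_ekelandSet_eq_singleton hlsc ⟨0, forall_mem_range.2 hφ0⟩ u
  refine ⟨v, by linarith [mem_ekelandSet.1 hvu, dist_comm u v], fun x hxv => ?_⟩
  by_contra! hx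
  have hxS : x ∈ ekelandSet φ v := mem_ekelandSet.2 (by linarith [dist_comm v x])
  rw [hv] at hxS
  exact hxv hxS
end

section
/- For each u in M there exists v in M with u ≤ v such that φ is constant on the set {x ∈ M : v ≤ x}. -/
/-!
Let `β x` be the infimum of `φ` over `{y | x ≤ y}`; it is finite because `φ ≥ 0`. Starting from `u`,
choose `s (n+1) ≥ s n` with `φ (s (n+1)) < β (s n) + 1/(n+1)` and let `b` bound this ascending
sequence. For `x ≥ b` we have `x ≥ s n` for every `n`, so
`φ b ≤ φ (s (n+1)) < β (s n) + 1/(n+1) ≤ φ x + 1/(n+1)`; hence `φ b ≤ φ x ≤ φ b`.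
-/

open Set

namespace BrezisBrowder

variable {M : Type*} [Preorder M]

noncomputable def infAbove (φ : M → ℝ) (x : M) : ℝ := sInf (φ '' Ici x)

variable {φ : M → ℝ}

lemma infAbove_le (hφ : BddBelow (range φ)) {x y : M} (hxy : x ≤ y) : infAbove φ x ≤ φ y :=
  csInf_le (hφ.mono (image_subset_range _ _)) (mem_image_of_mem φ hxy)

lemma exists_ge_lt_infAbove_add (x : M) {ε : ℝ} (hε : 0 < ε) :
    ∃ y, x ≤ y ∧ φ y < infAbove φ x + ε := by
  obtain ⟨_, ⟨y, hy, rfl⟩, hlt⟩ :=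
    exists_lt_of_csInf_lt (nonempty_Ici.image φ) (lt_add_of_pos_right (infAbove φ x) hε)
  exact ⟨y, hy, hlt⟩

lemma exists_seq_lt_infAbove_add (φ : M → ℝ) (u : M) :
    ∃ s : ℕ → M, s 0 = u ∧ (∀ n, s n ≤ s (n + 1)) ∧
      ∀ n : ℕ, φ (s (n + 1)) < infAbove φ (s n) + 1 / (n + 1) := by
  choose f hf_ge hf_lt using fun (n : ℕ) (x : M) =>
    exists_ge_lt_infAbove_add (φ := φ) x (Nat.one_div_pos_of_nat (n := n))
  let s : ℕ → M := fun n => Nat.rec u f n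
  exact ⟨s, rfl, fun n => hf_ge n (s n), fun n => hf_lt n (s n)⟩

lemma apply_eq_of_upperBound_le (hanti : Antitone φ) (hφ : BddBelow (range φ)) {s : ℕ → M}
    (hs : ∀ n : ℕ, φ (s (n + 1)) < infAbove φ (s n) + 1 / (n + 1)) {b : M} (hb : ∀ n, s n ≤ b)
    {x : M} (hx : b ≤ x) : φ x = φ b := by
  have hbx : φ b ≤ φ x := by
    refine le_of_forall_pos_le_add fun ε hε => ?_
    obtain ⟨n, hn⟩ := exists_nat_one_div_lt hε
    calc φ b ≤ φ (s (n + 1)) := hanti (hb (n + 1))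
      _ ≤ infAbove φ (s n) + 1 / (n + 1) := (hs n).le
      _ ≤ φ x + ε := add_le_add (infAbove_le hφ ((hb n).trans hx)) hn.le
  exact (hanti hx).antisymm hbx

end BrezisBrowder

/-- Brezis–Browder ordering principle: in a sequentially inductive
quasi-ordered set, for each u there is v ≥ u with φ constant on {x : v ≤ x}. -/
theorem stmt_2 {M : Type*} [Preorder M] (φ : M → ℝ) (hφ0 : ∀ x, 0 ≤ φ x)
    (hind : ∀ s : ℕ → M, (∀ n, s n ≤ s (n + 1)) → ∃ b : M, ∀ n, s n ≤ b)
    (hdec : ∀ x y : M, x ≤ y → φ y ≤ φ x) (u : M) :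
    ∃ v : M, u ≤ v ∧ ∀ x : M, v ≤ x → φ x = φ v := by
  have hbdd : BddBelow (range φ) := ⟨0, forall_mem_range.2 hφ0⟩
  obtain ⟨s, rfl, hmono, happrox⟩ := BrezisBrowder.exists_seq_lt_infAbove_add φ u
  obtain ⟨b, hb⟩ := hind s hmono
  exact ⟨b, hb 0, fun x hx =>
    BrezisBrowder.apply_eq_of_upperBound_le (fun _ _ => hdec _ _) hbdd happrox hb hx⟩
end

section
/- If a sequence (uₙ) in M is ≤-ascending and satisfies (1/2)(φ(uₙ) + β(uₙ)) > φ(uₙ₊₁) for all n, and v is an upper bound of (uₙ), then φ(v) = β(v); that is, v is (≤,φ)-maximal. -/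
/-! A bounded-below sequence with `a (n + 1) ≤ (a n + b) / 2` has infimum at most `b`: otherwise
`a n` gets within `ε` of the infimum `L` and then `L ≤ a (n + 1) ≤ (L + ε + b) / 2`. Along the
chain `φ (s n)` the bound `b = β v` is available because `β` increases along `≤`, and
`φ v ≤ inf φ (s n) ≤ β v ≤ φ v`. -/

open Set

theorem ciInf_le_of_forall_le_midpoint {a : ℕ → ℝ} {b : ℝ} (hbdd : BddBelow (range a))
    (hstep : ∀ n, a (n + 1) ≤ (a n + b) / 2) : ⨅ n, a n ≤ b := by
  refine le_of_forall_pos_le_add fun ε hε => ?_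
  obtain ⟨n, hn⟩ := exists_lt_of_ciInf_lt (lt_add_of_pos_right (⨅ n, a n) hε)
  have hinf : ⨅ n, a n ≤ a (n + 1) := ciInf_le hbdd (n + 1)
  linarith [hstep n]

section Preorder

variable {M : Type*} [Preorder M] {φ : M → ℝ}

theorem sInf_image_Ici_le_self (hφ : BddBelow (range φ)) (v : M) :
    sInf (φ '' Ici v) ≤ φ v :=
  csInf_le (hφ.mono (image_subset_range _ _)) ⟨v, self_mem_Ici, rfl⟩

theorem sInf_image_Ici_mono (hφ : BddBelow (range φ)) {u v : M} (huv : u ≤ v) :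
    sInf (φ '' Ici u) ≤ sInf (φ '' Ici v) :=
  csInf_le_csInf (hφ.mono (image_subset_range _ _)) ⟨φ v, v, self_mem_Ici, rfl⟩
    (image_mono (Ici_subset_Ici.mpr huv))

end Preorder

theorem stmt_5_general {M : Type*} [Preorder M] (φ : M → ℝ) (hφ0 : ∀ x, 0 ≤ φ x)
    (hdec : ∀ x y : M, x ≤ y → φ y ≤ φ x)
    (β : M → ℝ) (hβ : ∀ v, β v = sInf (φ '' {x : M | v ≤ x}))
    (s : ℕ → M)
    (hstep : ∀ n, (1 / 2) * (φ (s n) + β (s n)) > φ (s (n + 1)))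
    (v : M) (hub : ∀ n, s n ≤ v) :
    φ v = β v := by
  have hφ : BddBelow (range φ) := ⟨0, by rintro _ ⟨x, rfl⟩; exact hφ0 x⟩
  have hβv : β v ≤ φ v := (hβ v).trans_le (sInf_image_Ici_le_self hφ v)
  have hφv : φ v ≤ ⨅ n, φ (s n) := le_ciInf fun n => hdec _ _ (hub n)
  have hinf : ⨅ n, φ (s n) ≤ β v := by
    refine ciInf_le_of_forall_le_midpoint (hφ.mono (range_comp_subset_range s φ)) fun n => ?_
    have hβn : β (s n) ≤ β v := by
      rw [hβ, hβ]
      exact sInf_image_Ici_mono hφ (hub n)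
    linarith [hstep n]
  linarith

/-- If (uₙ) is ascending with (1/2)(φ uₙ + β uₙ) > φ uₙ₊₁ for all n and v
is an upper bound of (uₙ), then φ v = β v, i.e. v is (≤,φ)-maximal. -/
theorem stmt_5 {M : Type*} [Preorder M] (φ : M → ℝ) (hφ0 : ∀ x, 0 ≤ φ x)
    (hdec : ∀ x y : M, x ≤ y → φ y ≤ φ x)
    (β : M → ℝ) (hβ : ∀ v, β v = sInf (φ '' {x : M | v ≤ x}))
    (s : ℕ → M) (hasc : ∀ n, s n ≤ s (n + 1))
    (hstep : ∀ n, (1 / 2) * (φ (s n) + β (s n)) > φ (s (n + 1)))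
    (v : M) (hub : ∀ n, s n ≤ v) :
    φ v = β v :=
  stmt_5_general φ hφ0 hdec β hβ s hstep v hub
end

section
/- For each u ∈ M there exists a (≤,φ)-maximal v ∈ M with u ≤ v. Moreover, every (≤,φ)-maximal point z is (≤,𝒱)-maximal: z ≤ w implies (z,w) ∈ ⋂𝒱. -/
/-!
Build an ascending chain `u = s 0 ≤ s 1 ≤ …` in which `s (n + 1)` nearly minimises `φ` over the
upper set of `s n`, up to `1 / (n + 1)`. Along the chain the values of `φ` then differ by less than
`1 / (n + 1)` beyond index `n + 1`, so compatibility makes the chain `𝒱`-Cauchy; its `𝒱`-limit `v`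
is an upper bound of the chain, and every `y ≥ v` satisfies `φ v < φ y + 1 / (n + 1)` for all `n`,
which forces `φ y = φ v`.
-/

open Set

section Family

variable {M : Type*} [Preorder M] (φ : M → ℝ) (𝒱 : Set (Set (M × M)))

def FamilyCauchySeq (s : ℕ → M) : Prop :=
  ∀ V ∈ 𝒱, ∃ N : ℕ, ∀ p q : ℕ, N ≤ p → p ≤ q → (s p, s q) ∈ V

def FamilyCompatible : Prop :=
  ∀ V ∈ 𝒱, ∃ δ > (0 : ℝ), ∀ x y : M, x ≤ y → φ x - φ y < δ → (x, y) ∈ V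

variable {φ 𝒱}

theorem FamilyCompatible.mem_of_le_of_eq (h : FamilyCompatible φ 𝒱) {V : Set (M × M)}
    (hV : V ∈ 𝒱) {x y : M} (hxy : x ≤ y) (hφ : φ y = φ x) : (x, y) ∈ V := by
  obtain ⟨δ, hδ, hmem⟩ := h V hV
  exact hmem x y hxy (by rwa [hφ, sub_self])

theorem FamilyCompatible.familyCauchySeq (h : FamilyCompatible φ 𝒱) {s : ℕ → M}
    (hs : Monotone s)
    (hφs : ∀ δ > (0 : ℝ), ∃ N : ℕ, ∀ p q : ℕ, N ≤ p → p ≤ q → φ (s p) - φ (s q) < δ) :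
    FamilyCauchySeq 𝒱 s := by
  intro V hV
  obtain ⟨δ, hδ, hmem⟩ := h V hV
  obtain ⟨N, hN⟩ := hφs δ hδ
  exact ⟨N, fun p q hp hpq => hmem _ _ (hs hpq) (hN p q hp hpq)⟩

end Family

section NearlyMinimizingChain

variable {M : Type*} [Preorder M] {φ : M → ℝ}

theorem exists_le_forall_lt_add (hφ : BddBelow (range φ)) (a : M) {ε : ℝ} (hε : 0 < ε) :
    ∃ y, a ≤ y ∧ ∀ x, a ≤ x → φ y < φ x + ε := by
  have hne : (φ '' Ici a).Nonempty := ⟨φ a, a, le_rfl, rfl⟩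
  have hbdd : BddBelow (φ '' Ici a) := hφ.mono (image_subset_range φ _)
  obtain ⟨_, ⟨y, hy, rfl⟩, hlt⟩ := Real.lt_sInf_add_pos hne hε
  exact ⟨y, hy, fun x hx => hlt.trans_le (by gcongr; exact csInf_le hbdd ⟨x, hx, rfl⟩)⟩

theorem exists_chain_lt_add_one_div (hφ : BddBelow (range φ)) (u : M) :
    ∃ s : ℕ → M, s 0 = u ∧ (∀ n, s n ≤ s (n + 1)) ∧
      ∀ n x, s n ≤ x → φ (s (n + 1)) < φ x + 1 / (n + 1) := by
  choose f hle hlt using fun (a : M) (n : ℕ) =>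
    exists_le_forall_lt_add hφ a (Nat.one_div_pos_of_nat : (0 : ℝ) < 1 / (n + 1))
  exact ⟨fun n => Nat.rec u (fun k a => f a k) n, rfl, fun n => hle _ n, fun n => hlt _ n⟩

variable {s : ℕ → M}

theorem sub_lt_of_chain (hφ : Antitone φ) (hstep : ∀ n, s n ≤ s (n + 1))
    (hnear : ∀ n x, s n ≤ x → φ (s (n + 1)) < φ x + 1 / (n + 1)) :
    ∀ δ > (0 : ℝ), ∃ N : ℕ, ∀ p q : ℕ, N ≤ p → p ≤ q → φ (s p) - φ (s q) < δ := by
  intro δ hδ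
  obtain ⟨n, hn⟩ := exists_nat_one_div_lt hδ
  have hs : Monotone s := monotone_nat_of_le_succ hstep
  refine ⟨n + 1, fun p q hp hpq => ?_⟩
  have hp' : φ (s p) ≤ φ (s (n + 1)) := hφ (hs hp)
  have hq : φ (s (n + 1)) < φ (s q) + 1 / (n + 1) := hnear n (s q) (hs (by omega))
  linarith

theorem eq_of_chain_le (hφ : Antitone φ)
    (hnear : ∀ n x, s n ≤ x → φ (s (n + 1)) < φ x + 1 / (n + 1))
    {x : M} (hx : ∀ n, s n ≤ x) {y : M} (hxy : x ≤ y) :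
    φ y = φ x := by
  refine le_antisymm (hφ hxy) (le_of_forall_pos_lt_add fun ε hε => ?_)
  obtain ⟨n, hn⟩ := exists_nat_one_div_lt hε
  have hx' : φ x ≤ φ (s (n + 1)) := hφ (hx (n + 1))
  have hy : φ (s (n + 1)) < φ y + 1 / (n + 1) := hnear n y ((hx n).trans hxy)
  linarith

end NearlyMinimizingChain

/-- Uniform maximality principle: under sequential ≤-completeness of 𝒱,
𝒱-selfclosedness of ≤ and (≤,φ)-compatibility of 𝒱, each u admits a
(≤,φ)-maximal v with u ≤ v; moreover every (≤,φ)-maximal point z is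
(≤,𝒱)-maximal. -/
theorem stmt_7 {M : Type*} [Preorder M] (φ : M → ℝ) (hφ0 : ∀ x, 0 ≤ φ x)
    (hdec : ∀ x y : M, x ≤ y → φ y ≤ φ x)
    (𝒱 : Set (Set (M × M)))
    (hcomplete : ∀ s : ℕ → M, (∀ n, s n ≤ s (n + 1)) →
      (∀ V ∈ 𝒱, ∃ N : ℕ, ∀ p q : ℕ, N ≤ p → p ≤ q → (s p, s q) ∈ V) →
      ∃ x : M, ∀ V ∈ 𝒱, ∃ N : ℕ, ∀ n, N ≤ n → (s n, x) ∈ V)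
    (hselfclosed : ∀ s : ℕ → M, (∀ n, s n ≤ s (n + 1)) →
      ∀ x : M, (∀ V ∈ 𝒱, ∃ N : ℕ, ∀ n, N ≤ n → (s n, x) ∈ V) →
      ∀ n, s n ≤ x)
    (hcompat : ∀ V ∈ 𝒱, ∃ δ > (0 : ℝ),
      ∀ x y : M, x ≤ y → φ x - φ y < δ → (x, y) ∈ V) :
    (∀ u : M, ∃ v : M, u ≤ v ∧ ∀ x : M, v ≤ x → φ x = φ v) ∧
    (∀ z : M, (∀ x : M, z ≤ x → φ x = φ z) →
      ∀ w : M, z ≤ w → ∀ V ∈ 𝒱, (z, w) ∈ V) := by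
  have hφ : Antitone φ := fun x y => hdec x y
  have hcompat' : FamilyCompatible φ 𝒱 := hcompat
  refine ⟨fun u => ?_, fun z hz w hzw V hV => hcompat'.mem_of_le_of_eq hV hzw (hz w hzw)⟩
  have hbdd : BddBelow (range φ) := ⟨0, forall_mem_range.2 hφ0⟩
  obtain ⟨s, rfl, hstep, hnear⟩ := exists_chain_lt_add_one_div hbdd u
  have hcauchy : FamilyCauchySeq 𝒱 s :=
    hcompat'.familyCauchySeq (monotone_nat_of_le_succ hstep)
      (sub_lt_of_chain hφ hstep hnear)
  obtain ⟨v, hv⟩ := hcomplete s hstep hcauchy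
  have hub : ∀ n, s n ≤ v := hselfclosed s hstep v hv
  exact ⟨v, hub 0, fun x hvx => eq_of_chain_le hφ hnear hub hvx⟩
end

section
/- For each u ∈ X there exists v ∈ X such that (i) e_λ(u,v) ≤ φ(u) − φ(v) for all λ ∈ Λ, and (ii) for every x ≠ v there exists μ ∈ Λ with e_μ(v,x) > φ(v) − φ(x). -/
/-!
Brezis–Browder argument. Order `X` by `y ∈ brondstedSet e φ x`, i.e. `φ y ≤ φ x` and
`e_λ(x, y) ≤ φ x - φ y` for all `λ`; this is a preorder by the Λ-triangularity of `E`.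
Starting from `u`, pick successively `s (n + 1)` in the set of `s n` with `φ (s (n + 1))`
within `1 / (n + 1)` of the infimum of `φ` over that set. The values `φ (s n)` decrease to
some `a`, which makes `s` an `E`-Cauchy sequence; its limit `v` lies in every set of the
chain, because `φ v ≤ a` by lower semicontinuity. Any `x` with `e_μ(v, x) ≤ φ v - φ x` for
all `μ` then lies in all these sets as well, so `φ x ≥ a ≥ φ v`, forcing `e_μ(v, x) = 0`
and `x = v`.
-/

open Filter Topology

section

variable {X Λ : Type*}

def brondstedSet (e : Λ → X → X → ℝ) (φ : X → ℝ) (x : X) : Set X :=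
  {y | φ y ≤ φ x ∧ ∀ l, e l x y ≤ φ x - φ y}

theorem exists_seq_mem_forall_le_add {S : X → Set X} (hS : ∀ x, (S x).Nonempty)
    {φ : X → ℝ} (hφ : BddBelow (Set.range φ)) {ε : ℕ → ℝ} (hε : ∀ n, 0 < ε n) (u : X) :
    ∃ s : ℕ → X, s 0 = u ∧ (∀ n, s (n + 1) ∈ S (s n)) ∧
      ∀ n, ∀ y ∈ S (s n), φ (s (n + 1)) ≤ φ y + ε n := by
  have step : ∀ x n, ∃ y ∈ S x, ∀ z ∈ S x, φ y ≤ φ z + ε n := by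
    intro x n
    obtain ⟨_, ⟨y, hy, rfl⟩, hlt⟩ := Real.lt_sInf_add_pos ((hS x).image φ) (hε n)
    refine ⟨y, hy, fun z hz => hlt.le.trans ?_⟩
    gcongr
    exact csInf_le (hφ.mono (Set.image_subset_range _ _)) ⟨z, hz, rfl⟩
  choose f hfS hfle using step
  exact ⟨fun n => Nat.rec u (fun n x => f x n) n, rfl, fun n => hfS _ _, fun n => hfle _ _⟩

theorem le_of_forall_mem_of_le_add {S : X → Set X} {φ : X → ℝ} {s : ℕ → X} {ε : ℕ → ℝ}
    {a : ℝ} {x : X} (hmin : ∀ n, ∀ y ∈ S (s n), φ (s (n + 1)) ≤ φ y + ε n)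
    (hε : Tendsto ε atTop (𝓝 0)) (ha : Tendsto (fun n => φ (s n)) atTop (𝓝 a))
    (hx : ∀ n, x ∈ S (s n)) : a ≤ φ x := by
  have hshift : Tendsto (fun n => φ (s (n + 1))) atTop (𝓝 a) :=
    ha.comp (tendsto_add_atTop_nat 1)
  have hbound : Tendsto (fun n => φ x + ε n) atTop (𝓝 (φ x + 0)) :=
    tendsto_const_nhds.add hε
  simpa using le_of_tendsto_of_tendsto' hshift hbound fun n => hmin n x (hx n)

section brondstedSet

variable {e : Λ → X → X → ℝ} {φ : X → ℝ}

theorem mem_brondstedSet_self (hrefl : ∀ l x, e l x x = 0) (x : X) :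
    x ∈ brondstedSet e φ x :=
  ⟨le_rfl, fun l => by simp [hrefl]⟩

theorem brondstedSet_trans (htri : ∀ l, ∃ m, ∀ x y z, e l x z ≤ e m x y + e m y z)
    {x y z : X} (hy : y ∈ brondstedSet e φ x) (hz : z ∈ brondstedSet e φ y) :
    z ∈ brondstedSet e φ x := by
  refine ⟨hz.1.trans hy.1, fun l => ?_⟩
  obtain ⟨m, hm⟩ := htri l
  linarith [hm x y z, hy.2 m, hz.2 m]

theorem mem_brondstedSet_of_chain (hrefl : ∀ l x, e l x x = 0)
    (htri : ∀ l, ∃ m, ∀ x y z, e l x z ≤ e m x y + e m y z) {s : ℕ → X}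
    (hs : ∀ n, s (n + 1) ∈ brondstedSet e φ (s n)) {m n : ℕ} (hmn : m ≤ n) :
    s n ∈ brondstedSet e φ (s m) := by
  induction n, hmn using Nat.le_induction with
  | base => exact mem_brondstedSet_self hrefl _
  | succ n _ ih => exact brondstedSet_trans htri ih (hs n)

theorem brondstedSet_chain_cauchy (hrefl : ∀ l x, e l x x = 0)
    (htri : ∀ l, ∃ m, ∀ x y z, e l x z ≤ e m x y + e m y z) {s : ℕ → X}
    (hs : ∀ n, s (n + 1) ∈ brondstedSet e φ (s n)) {a : ℝ}
    (ha : Tendsto (fun n => φ (s n)) atTop (𝓝 a)) (l : Λ) (ε : ℝ) (hε : 0 < ε) :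
    ∃ N, ∀ i j, N ≤ i → i ≤ j → e l (s i) (s j) < ε := by
  have hanti : Antitone fun n => φ (s n) := fun i j hij =>
    (mem_brondstedSet_of_chain hrefl htri hs hij).1
  obtain ⟨N, hN⟩ := eventually_atTop.1 (ha.eventually_lt_const (lt_add_of_pos_right a hε))
  refine ⟨N, fun i j hi hij => ?_⟩
  linarith [(mem_brondstedSet_of_chain hrefl htri hs hij).2 l, hanti.le_of_tendsto ha j,
    hN i hi]

theorem mem_brondstedSet_of_tendsto (htri : ∀ l, ∃ m, ∀ x y z, e l x z ≤ e m x y + e m y z)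
    {x v : X} {t : ℕ → X} {a : ℝ} (ht : ∀ᶠ n in atTop, t n ∈ brondstedSet e φ x)
    (htv : ∀ l, Tendsto (fun n => e l (t n) v) atTop (𝓝 0))
    (hφt : Tendsto (fun n => φ (t n)) atTop (𝓝 a)) (hφv : φ v ≤ a) :
    v ∈ brondstedSet e φ x := by
  refine ⟨hφv.trans (le_of_tendsto hφt (ht.mono fun n hn => hn.1)), fun l => ?_⟩
  obtain ⟨m, hm⟩ := htri l
  have hlim : Tendsto (fun n => φ x - φ (t n) + e m (t n) v) atTop (𝓝 (φ x - a + 0)) :=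
    (tendsto_const_nhds.sub hφt).add (htv m)
  have hle : e l x v ≤ φ x - a + 0 :=
    ge_of_tendsto hlim (ht.mono fun n hn => (hm x (t n) v).trans (by linarith [hn.2 m]))
  linarith

end brondstedSet

end

theorem stmt_14_general {X : Type*} {Λ : Type*} [Preorder Λ]
    (e : Λ → X → X → ℝ)
    (hnn : ∀ l x y, 0 ≤ e l x y)
    (hrefl : ∀ l x, e l x x = 0)
    (hsuff : ∀ x y, (∀ l, e l x y = 0) → x = y)
    (htri : ∀ l : Λ, ∃ m : Λ, l ≤ m ∧ ∀ x y z, e l x z ≤ e m x y + e m y z)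
    (φ : X → ℝ) (hφ0 : ∀ x, 0 ≤ φ x)
    (hcomplete : ∀ s : ℕ → X,
      (∀ l : Λ, ∀ ε : ℝ, 0 < ε → ∃ N : ℕ, ∀ i j : ℕ, N ≤ i → i ≤ j →
        e l (s i) (s j) < ε) →
      (∀ n, φ (s (n + 1)) ≤ φ (s n)) →
      ∃ x : X, ∀ l : Λ, Tendsto (fun n => e l (s n) x) atTop (𝓝 0))
    (hlsc : ∀ (s : ℕ → X) (x : X),
      (∀ l : Λ, Tendsto (fun n => e l (s n) x) atTop (𝓝 0)) →
      (∀ n, φ (s (n + 1)) ≤ φ (s n)) →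
      ∀ a : ℝ, Tendsto (fun n => φ (s n)) atTop (𝓝 a) → φ x ≤ a)
    (u : X) :
    ∃ v : X, (∀ l : Λ, e l u v ≤ φ u - φ v) ∧
      ∀ x : X, x ≠ v → ∃ m : Λ, e m v x > φ v - φ x := by
  have htri' : ∀ l, ∃ m, ∀ x y z, e l x z ≤ e m x y + e m y z :=
    fun l => (htri l).imp fun _ h => h.2
  have hbdd : BddBelow (Set.range φ) := ⟨0, by rintro _ ⟨x, rfl⟩; exact hφ0 x⟩
  obtain ⟨s, rfl, hs, hmin⟩ := exists_seq_mem_forall_le_add (S := brondstedSet e φ)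
    (ε := fun n => 1 / ((n : ℝ) + 1)) (fun x => ⟨x, mem_brondstedSet_self hrefl x⟩) hbdd
    (fun _ => Nat.one_div_pos_of_nat) u
  have hdesc : ∀ n, φ (s (n + 1)) ≤ φ (s n) := fun n => (hs n).1
  obtain ⟨a, ha⟩ : ∃ a, Tendsto (fun n => φ (s n)) atTop (𝓝 a) :=
    ⟨_, tendsto_atTop_ciInf (antitone_nat_of_succ_le hdesc)
      (hbdd.mono (Set.range_comp_subset_range s φ))⟩
  obtain ⟨v, hv⟩ := hcomplete s (brondstedSet_chain_cauchy hrefl htri' hs ha) hdesc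
  have hva : φ v ≤ a := hlsc s v hv hdesc a ha
  have hvS : ∀ n, v ∈ brondstedSet e φ (s n) := fun n =>
    mem_brondstedSet_of_tendsto htri'
      (eventually_atTop.2 ⟨n, fun _ hj => mem_brondstedSet_of_chain hrefl htri' hs hj⟩) hv ha hva
  refine ⟨v, (hvS 0).2, fun x hxv => ?_⟩
  by_contra! hx
  have hvx : φ v ≤ φ x := by
    by_contra! hlt
    refine hlt.not_ge (hva.trans (le_of_forall_mem_of_le_add hmin
      tendsto_one_div_add_atTop_nhds_zero_nat ha fun n => ?_))
    exact brondstedSet_trans htri' (hvS n) ⟨hlt.le, hx⟩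
  exact hxv (hsuff v x fun m => le_antisymm ((hx m).trans (sub_nonpos.2 hvx)) (hnn m v x)).symm

/-- Variational principle in Fang uniform spaces: under sequential
φ-completeness of E and sequential descending E-lower semicontinuity of φ,
for each u there exists v with e_λ(u,v) ≤ φ(u) − φ(v) for all λ, and for
each x ≠ v some μ with e_μ(v,x) > φ(v) − φ(x). -/
theorem stmt_14 {X : Type*} {Λ : Type*} [Preorder Λ]
    (hdir : ∀ a b : Λ, ∃ c : Λ, a ≤ c ∧ b ≤ c)
    (e : Λ → X → X → ℝ)
    (hnn : ∀ l x y, 0 ≤ e l x y)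
    (hrefl : ∀ l x, e l x x = 0)
    (hsym : ∀ l x y, e l x y = e l y x)
    (hsuff : ∀ x y, (∀ l, e l x y = 0) → x = y)
    (hmono : ∀ l m : Λ, l ≤ m → ∀ x y, e l x y ≤ e m x y)
    (htri : ∀ l : Λ, ∃ m : Λ, l ≤ m ∧ ∀ x y z, e l x z ≤ e m x y + e m y z)
    (φ : X → ℝ) (hφ0 : ∀ x, 0 ≤ φ x)
    (hcomplete : ∀ s : ℕ → X,
      (∀ l : Λ, ∀ ε : ℝ, 0 < ε → ∃ N : ℕ, ∀ i j : ℕ, N ≤ i → i ≤ j →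
        e l (s i) (s j) < ε) →
      (∀ n, φ (s (n + 1)) ≤ φ (s n)) →
      ∃ x : X, ∀ l : Λ, Tendsto (fun n => e l (s n) x) atTop (𝓝 0))
    (hlsc : ∀ (s : ℕ → X) (x : X),
      (∀ l : Λ, Tendsto (fun n => e l (s n) x) atTop (𝓝 0)) →
      (∀ n, φ (s (n + 1)) ≤ φ (s n)) →
      ∀ a : ℝ, Tendsto (fun n => φ (s n)) atTop (𝓝 a) → φ x ≤ a)
    (u : X) :
    ∃ v : X, (∀ l : Λ, e l u v ≤ φ u - φ v) ∧
      ∀ x : X, x ≠ v → ∃ m : Λ, e m v x > φ v - φ x :=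
  stmt_14_general e hnn hrefl hsuff htri φ hφ0 hcomplete hlsc u
end

section
/- The Brøndsted quasi-order on X defined by x ≤ y iff e_λ(x,y) ≤ φ(x) − φ(y) for all λ ∈ Λ is selfclosed with respect to E-convergence: if (xₙ) is ≤-ascending and E-converges to x, then xₙ ≤ x for all n. -/
/-!
For `k ≥ n`, the triangle inequality and ascent give
`e_λ(sₙ, x) ≤ φ(sₙ) - φ(sₖ) + e_μ(sₖ, x)`. Along the ascending sequence `φ ∘ s` decreases to its
infimum `a`, so letting `k → ∞` yields `e_λ(sₙ, x) ≤ φ(sₙ) - a`, and lower semicontinuity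
gives `φ x ≤ a`.
-/

open Filter Topology

section
variable {X : Type*} (φ : X → ℝ) (s : ℕ → X)

lemma antitone_comp_of_le_sub {d : X → X → ℝ} (hd : ∀ x y, 0 ≤ d x y)
    (hasc : ∀ n m, n ≤ m → d (s n) (s m) ≤ φ (s n) - φ (s m)) : Antitone (φ ∘ s) :=
  antitone_nat_of_succ_le fun n => by
    simp only [Function.comp_apply]
    linarith [hasc n (n + 1) n.le_succ, hd (s n) (s (n + 1))]

lemma le_sub_of_tendsto {d d' : X → X → ℝ} (htri : ∀ x y z, d x z ≤ d' x y + d' y z)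
    (hasc : ∀ n m, n ≤ m → d' (s n) (s m) ≤ φ (s n) - φ (s m))
    {x : X} (hconv : Tendsto (fun k => d' (s k) x) atTop (𝓝 0))
    {a : ℝ} (hφ : Tendsto (φ ∘ s) atTop (𝓝 a)) (n : ℕ) :
    d (s n) x ≤ φ (s n) - a := by
  have hlim : Tendsto (fun k => φ (s n) - φ (s k) + d' (s k) x) atTop (𝓝 (φ (s n) - a + 0)) :=
    (tendsto_const_nhds.sub hφ).add hconv
  have hbound : ∀ᶠ k in atTop, d (s n) x ≤ φ (s n) - φ (s k) + d' (s k) x :=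
    (eventually_ge_atTop n).mono fun k hk => by
      linarith [htri (s n) (s k) x, hasc n k hk]
  simpa using ge_of_tendsto hlim hbound

end

theorem stmt_15_general {X : Type*} {Λ : Type*} [Preorder Λ]
    (e : Λ → X → X → ℝ)
    (hnn : ∀ l x y, 0 ≤ e l x y)
    (htri : ∀ l : Λ, ∃ m : Λ, l ≤ m ∧ ∀ x y z, e l x z ≤ e m x y + e m y z)
    (φ : X → ℝ) (hφ0 : ∀ x, 0 ≤ φ x)
    (hlsc : ∀ (s : ℕ → X) (x : X),
      (∀ l : Λ, Tendsto (fun n => e l (s n) x) atTop (𝓝 0)) →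
      (∀ n, φ (s (n + 1)) ≤ φ (s n)) →
      ∀ a : ℝ, Tendsto (fun n => φ (s n)) atTop (𝓝 a) → φ x ≤ a)
    (s : ℕ → X)
    (hasc : ∀ n m : ℕ, n ≤ m → ∀ l : Λ, e l (s n) (s m) ≤ φ (s n) - φ (s m))
    (x : X)
    (hconv : ∀ l : Λ, Tendsto (fun n => e l (s n) x) atTop (𝓝 0)) :
    ∀ n : ℕ, ∀ l : Λ, e l (s n) x ≤ φ (s n) - φ x := by
  intro n l
  have hanti : Antitone (φ ∘ s) := antitone_comp_of_le_sub φ s (hnn l) (hasc · · · l)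
  have hφ : Tendsto (φ ∘ s) atTop (𝓝 (⨅ k, φ (s k))) :=
    tendsto_atTop_ciInf hanti ⟨0, by rintro _ ⟨k, rfl⟩; exact hφ0 _⟩
  have hφx : φ x ≤ ⨅ k, φ (s k) := hlsc s x hconv (fun k => hanti k.le_succ) _ hφ
  obtain ⟨m, -, hm⟩ := htri l
  linarith [le_sub_of_tendsto φ s hm (hasc · · · m) (hconv m) hφ n]

/-- The Brøndsted quasi-order x ≤ y iff e_λ(x,y) ≤ φ(x) − φ(y) for all λ is
selfclosed under E-convergence: the E-limit of an ascending sequence is an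
upper bound of it. -/
theorem stmt_15 {X : Type*} {Λ : Type*} [Preorder Λ]
    (hdir : ∀ a b : Λ, ∃ c : Λ, a ≤ c ∧ b ≤ c)
    (e : Λ → X → X → ℝ)
    (hnn : ∀ l x y, 0 ≤ e l x y)
    (hrefl : ∀ l x, e l x x = 0)
    (hsym : ∀ l x y, e l x y = e l y x)
    (hsuff : ∀ x y, (∀ l, e l x y = 0) → x = y)
    (hmono : ∀ l m : Λ, l ≤ m → ∀ x y, e l x y ≤ e m x y)
    (htri : ∀ l : Λ, ∃ m : Λ, l ≤ m ∧ ∀ x y z, e l x z ≤ e m x y + e m y z)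
    (φ : X → ℝ) (hφ0 : ∀ x, 0 ≤ φ x)
    (hlsc : ∀ (s : ℕ → X) (x : X),
      (∀ l : Λ, Tendsto (fun n => e l (s n) x) atTop (𝓝 0)) →
      (∀ n, φ (s (n + 1)) ≤ φ (s n)) →
      ∀ a : ℝ, Tendsto (fun n => φ (s n)) atTop (𝓝 a) → φ x ≤ a)
    (s : ℕ → X)
    (hasc : ∀ n m : ℕ, n ≤ m → ∀ l : Λ, e l (s n) (s m) ≤ φ (s n) - φ (s m))
    (x : X)
    (hconv : ∀ l : Λ, Tendsto (fun n => e l (s n) x) atTop (𝓝 0)) :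
    ∀ n : ℕ, ∀ l : Λ, e l (s n) x ≤ φ (s n) - φ x :=
  stmt_15_general e hnn htri φ hφ0 hlsc s hasc x hconv
end

section
/- For each λ ∈ Λ, define d_λ(x,y) = sup{f_i(x,y) : i ∈ λ} where λ ranges over nonempty finite subsets of I ordered by inclusion. Then (Λ,⊆) is a directed ordered set and the family D = (d_λ)_{λ∈Λ} is sufficient, Λ-monotone and Λ-triangular; i.e., every BMLO uniform space gives rise to a Fang uniform space with equivalent convergence and Cauchy notions. -/
/-!
Each `d_λ` is the maximum of the finitely many `f_i`, `i ∈ λ`. On singletons it recovers `f_i`,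
which gives sufficiency and the passage from `D` back to `F`; conversely a finite maximum is small
as soon as each of its terms is. For triangularity, enlarge `λ` by the indices `j(i), k(i)` that
`I`-triangularity attaches to each `i ∈ λ`: every term of `d_λ(x,z)` is then bounded by two terms
of `d_m(x,y) + d_m(y,z)`.
-/

open Filter Topology Finset

abbrev NonemptyFinset (I : Type*) := {s : Finset I // s.Nonempty}

namespace NonemptyFinset

variable {I : Type*}

def singleton (i : I) : NonemptyFinset I := ⟨{i}, singleton_nonempty i⟩

theorem exists_superset_superset (a b : NonemptyFinset I) :
    ∃ c : NonemptyFinset I, a.1 ⊆ c.1 ∧ b.1 ⊆ c.1 := by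
  classical
  exact ⟨⟨a.1 ∪ b.1, a.2.mono subset_union_left⟩, subset_union_left, subset_union_right⟩

theorem tendsto_sup'_iff {α β : Type*} [TopologicalSpace β] [SemilatticeSup β] [ContinuousSup β]
    {g : I → α → β} {l : Filter α} {b : β} :
    (∀ i, Tendsto (g i) l (𝓝 b)) ↔
      ∀ L : NonemptyFinset I, Tendsto (fun a => L.1.sup' L.2 (g · a)) l (𝓝 b) := by
  refine ⟨fun h L => ?_, fun h i => by simpa [singleton] using h (singleton i)⟩
  simpa only [sup'_const] using Tendsto.finset_sup'_nhds_apply L.2 fun i _ => h i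

theorem uniformly_small_sup'_iff {β : Type*} [LinearOrder β] {g : I → ℕ → ℕ → β} {ε : β} :
    (∀ i, ∃ N, ∀ p q, N ≤ p → p ≤ q → g i p q < ε) ↔
      ∀ L : NonemptyFinset I, ∃ N, ∀ p q, N ≤ p → p ≤ q → L.1.sup' L.2 (g · p q) < ε := by
  refine ⟨fun h L => ?_, fun h i => by simpa [singleton] using h (singleton i)⟩
  choose N hN using h
  exact ⟨L.1.sup N, fun p q hp hpq => (sup'_lt_iff L.2).2 fun i hi =>
    hN i p q ((le_sup hi).trans hp) hpq⟩

section supFamily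

variable {X β : Type*} [LinearOrder β] (f : I → X → X → β)

def supFamily (L : NonemptyFinset I) (x y : X) : β := L.1.sup' L.2 (f · x y)

@[simp]
theorem supFamily_singleton (i : I) (x y : X) : supFamily f (singleton i) x y = f i x y :=
  sup'_singleton _

variable {f}

theorem supFamily_mono {L M : NonemptyFinset I} (hLM : L.1 ⊆ M.1) (x y : X) :
    supFamily f L x y ≤ supFamily f M x y :=
  sup'_mono _ hLM L.2

theorem eq_of_forall_supFamily_eq_zero [Zero β] (hsuff : ∀ x y, (∀ i, f i x y = 0) → x = y)
    {x y : X} (h : ∀ L, supFamily f L x y = 0) : x = y :=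
  hsuff x y fun i => by simpa using h (singleton i)

theorem exists_supFamily_triangle [Add β] [AddLeftMono β] [AddRightMono β]
    (htri : ∀ i : I, ∃ j k : I, ∀ x y z : X, f i x z ≤ f j x y + f k y z) (L : NonemptyFinset I) :
    ∃ M : NonemptyFinset I, L.1 ⊆ M.1 ∧
      ∀ x y z, supFamily f L x z ≤ supFamily f M x y + supFamily f M y z := by
  classical
  choose j k hjk using htri
  let M : NonemptyFinset I := ⟨L.1 ∪ L.1.image j ∪ L.1.image k, L.2.mono <|
    subset_union_left.trans subset_union_left⟩
  have hj : ∀ i ∈ L.1, j i ∈ M.1 := fun i hi =>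
    mem_union_left _ (mem_union_right _ (mem_image_of_mem j hi))
  have hk : ∀ i ∈ L.1, k i ∈ M.1 := fun i hi => mem_union_right _ (mem_image_of_mem k hi)
  refine ⟨M, subset_union_left.trans subset_union_left, fun x y z => sup'_le _ _ fun i hi => ?_⟩
  exact (hjk i x y z).trans <|
    add_le_add (le_sup' (f · x y) (hj i hi)) (le_sup' (f · y z) (hk i hi))

end supFamily

end NonemptyFinset

open NonemptyFinset in
theorem stmt_16_general {X : Type*} {I : Type*}
    (f : I → X → X → ℝ)
    (hsuff : ∀ x y, (∀ i, f i x y = 0) → x = y)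
    (htri : ∀ i : I, ∃ j k : I, ∀ x y z : X,
      f i x z ≤ f j x y + f k y z)
    (d : {s : Finset I // s.Nonempty} → X → X → ℝ)
    (hd : ∀ (l : {s : Finset I // s.Nonempty}) (x y : X),
      d l x y = l.1.sup' l.2 (fun i => f i x y)) :
    (∀ a b : {s : Finset I // s.Nonempty},
      ∃ c : {s : Finset I // s.Nonempty}, a.1 ⊆ c.1 ∧ b.1 ⊆ c.1) ∧
    (∀ x y, (∀ l : {s : Finset I // s.Nonempty}, d l x y = 0) → x = y) ∧
    (∀ l m : {s : Finset I // s.Nonempty}, l.1 ⊆ m.1 →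
      ∀ x y, d l x y ≤ d m x y) ∧
    (∀ l : {s : Finset I // s.Nonempty}, ∃ m : {s : Finset I // s.Nonempty},
      l.1 ⊆ m.1 ∧ ∀ x y z, d l x z ≤ d m x y + d m y z) ∧
    (∀ (s : ℕ → X) (x : X),
      (∀ i : I, Tendsto (fun n => f i (s n) x) atTop (𝓝 0)) ↔
      (∀ l : {s : Finset I // s.Nonempty},
        Tendsto (fun n => d l (s n) x) atTop (𝓝 0))) ∧
    (∀ s : ℕ → X,
      (∀ i : I, ∀ ε : ℝ, 0 < ε → ∃ N : ℕ, ∀ p q : ℕ, N ≤ p → p ≤ q →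
        f i (s p) (s q) < ε) ↔
      (∀ l : {s : Finset I // s.Nonempty}, ∀ ε : ℝ, 0 < ε →
        ∃ N : ℕ, ∀ p q : ℕ, N ≤ p → p ≤ q → d l (s p) (s q) < ε)) := by
  obtain rfl : d = supFamily f := funext₃ hd
  refine ⟨exists_superset_superset, fun x y => eq_of_forall_supFamily_eq_zero hsuff,
    fun l m hlm => supFamily_mono hlm, exists_supFamily_triangle htri,
    fun s x => tendsto_sup'_iff, fun s => ?_⟩
  exact ⟨fun h L ε hε => uniformly_small_sup'_iff.1 (fun i => h i ε hε) L,
    fun h i ε hε => uniformly_small_sup'_iff.2 (fun L => h L ε hε) i⟩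

/-- From a BMLO uniform space (X,F) over index set I, the family
d_λ(x,y) = max_{i∈λ} f_i(x,y), λ ranging over nonempty finite subsets of I
ordered by inclusion, yields a Fang uniform space: (Λ,⊆) is directed and D is
sufficient, Λ-monotone and Λ-triangular; moreover F- and D- convergence and
Cauchy notions coincide. -/
theorem stmt_16 {X : Type*} {I : Type*} [Nonempty I]
    (f : I → X → X → ℝ)
    (hnn : ∀ i x y, 0 ≤ f i x y)
    (hrefl : ∀ i x, f i x x = 0)
    (hsym : ∀ i x y, f i x y = f i y x)
    (hsuff : ∀ x y, (∀ i, f i x y = 0) → x = y)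
    (htri : ∀ i : I, ∃ j k : I, ∀ x y z : X,
      f i x z ≤ f j x y + f k y z)
    (d : {s : Finset I // s.Nonempty} → X → X → ℝ)
    (hd : ∀ (l : {s : Finset I // s.Nonempty}) (x y : X),
      d l x y = l.1.sup' l.2 (fun i => f i x y)) :
    (∀ a b : {s : Finset I // s.Nonempty},
      ∃ c : {s : Finset I // s.Nonempty}, a.1 ⊆ c.1 ∧ b.1 ⊆ c.1) ∧
    (∀ x y, (∀ l : {s : Finset I // s.Nonempty}, d l x y = 0) → x = y) ∧
    (∀ l m : {s : Finset I // s.Nonempty}, l.1 ⊆ m.1 →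
      ∀ x y, d l x y ≤ d m x y) ∧
    (∀ l : {s : Finset I // s.Nonempty}, ∃ m : {s : Finset I // s.Nonempty},
      l.1 ⊆ m.1 ∧ ∀ x y z, d l x z ≤ d m x y + d m y z) ∧
    (∀ (s : ℕ → X) (x : X),
      (∀ i : I, Tendsto (fun n => f i (s n) x) atTop (𝓝 0)) ↔
      (∀ l : {s : Finset I // s.Nonempty},
        Tendsto (fun n => d l (s n) x) atTop (𝓝 0))) ∧
    (∀ s : ℕ → X,
      (∀ i : I, ∀ ε : ℝ, 0 < ε → ∃ N : ℕ, ∀ p q : ℕ, N ≤ p → p ≤ q →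
        f i (s p) (s q) < ε) ↔
      (∀ l : {s : Finset I // s.Nonempty}, ∀ ε : ℝ, 0 < ε →
        ∃ N : ℕ, ∀ p q : ℕ, N ≤ p → p ≤ q → d l (s p) (s q) < ε)) :=
  stmt_16_general f hsuff htri d hd
end

section
/- For each u ∈ X there exists v ∈ X with d(u,v) ≤ φ(u) − φ(v), and d(v,x) > φ(v) − φ(x) for all x ≠ v. -/
open Filter Topology

/-!
Order `X` by `y ≼ z ↔ dist y z ≤ φ y - φ z` (a preorder along which `φ` decreases). Starting from
`u`, pick each next point `z ≼`-below the current `y` with `φ z` at most halfway between `φ y`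
and the infimum of `φ` over the points below `y`. Distances along the chain are dominated by
drops of `φ`, so the chain is Cauchy and converges; by descending lower semicontinuity its limit
`v` lies below every point of the chain. Anything below `v` is then below every point of the
chain, so its distance to `v` is at most the `n`-th drop of `φ`, which tends to `0`.
-/

section EkelandSet

variable {X : Type*} [PseudoMetricSpace X] (φ : X → ℝ)

def ekelandSet (y : X) : Set X := {z | dist y z ≤ φ y - φ z}

variable {φ}

theorem mem_ekelandSet {y z : X} : z ∈ ekelandSet φ y ↔ dist y z ≤ φ y - φ z := Iff.rfl

theorem mem_ekelandSet_self (y : X) : y ∈ ekelandSet φ y := by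
  simp [mem_ekelandSet]

theorem mem_ekelandSet_trans {x y z : X} (hy : y ∈ ekelandSet φ x) (hz : z ∈ ekelandSet φ y) :
    z ∈ ekelandSet φ x := by
  rw [mem_ekelandSet] at *
  linarith [dist_triangle x y z]

theorem le_of_mem_ekelandSet {y z : X} (hz : z ∈ ekelandSet φ y) : φ z ≤ φ y := by
  rw [mem_ekelandSet] at hz
  linarith [dist_nonneg (x := y) (y := z)]

theorem sInf_image_ekelandSet_le (hφ : BddBelow (Set.range φ)) {y z : X}
    (hz : z ∈ ekelandSet φ y) : sInf (φ '' ekelandSet φ y) ≤ φ z :=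
  csInf_le (hφ.mono (Set.image_subset_range _ _)) ⟨z, hz, rfl⟩

theorem exists_mem_ekelandSet_two_mul_le (y : X) :
    ∃ z ∈ ekelandSet φ y, 2 * φ z ≤ φ y + sInf (φ '' ekelandSet φ y) := by
  set i := sInf (φ '' ekelandSet φ y)
  by_cases hy : φ y ≤ i
  · exact ⟨y, mem_ekelandSet_self y, by linarith⟩
  · obtain ⟨_, ⟨z, hz, rfl⟩, hlt⟩ : ∃ w ∈ φ '' ekelandSet φ y, w < (φ y + i) / 2 :=
      exists_lt_of_csInf_lt ⟨φ y, y, mem_ekelandSet_self y, rfl⟩ (by linarith)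
    exact ⟨z, hz, by linarith⟩

end EkelandSet

section EkelandChain

variable {X : Type*} [PseudoMetricSpace X] {φ : X → ℝ} {s : ℕ → X}

theorem mem_ekelandSet_of_le (hs : ∀ n, s (n + 1) ∈ ekelandSet φ (s n)) {n m : ℕ} (h : n ≤ m) :
    s m ∈ ekelandSet φ (s n) := by
  induction h with
  | refl => exact mem_ekelandSet_self _
  | step _ ih => exact mem_ekelandSet_trans ih (hs _)

theorem antitone_comp_of_mem_ekelandSet_succ (hs : ∀ n, s (n + 1) ∈ ekelandSet φ (s n)) :
    Antitone (φ ∘ s) :=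
  antitone_nat_of_succ_le fun n => le_of_mem_ekelandSet (φ := φ) (hs n)

theorem tendsto_comp_iInf_of_mem_ekelandSet_succ (hφ : BddBelow (Set.range φ))
    (hs : ∀ n, s (n + 1) ∈ ekelandSet φ (s n)) :
    Tendsto (φ ∘ s) atTop (𝓝 (⨅ n, φ (s n))) :=
  tendsto_atTop_ciInf (antitone_comp_of_mem_ekelandSet_succ hs)
    (hφ.mono (Set.range_comp_subset_range s φ))

theorem cauchySeq_of_mem_ekelandSet_succ (hφ : BddBelow (Set.range φ))
    (hs : ∀ n, s (n + 1) ∈ ekelandSet φ (s n)) : CauchySeq s := by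
  have hφs : CauchySeq (φ ∘ s) := (tendsto_comp_iInf_of_mem_ekelandSet_succ hφ hs).cauchySeq
  rw [Metric.cauchySeq_iff'] at hφs ⊢
  intro ε hε
  obtain ⟨N, hN⟩ := hφs ε hε
  refine ⟨N, fun n hn => ?_⟩
  have hdrop : dist (s N) (s n) ≤ φ (s N) - φ (s n) := mem_ekelandSet_of_le hs hn
  have hclose := hN n hn
  rw [Function.comp_apply, Function.comp_apply, Real.dist_eq, abs_lt] at hclose
  rw [dist_comm]
  linarith

theorem mem_ekelandSet_of_tendsto (hs : ∀ n, s (n + 1) ∈ ekelandSet φ (s n)) {a : ℝ} {v : X}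
    (ha : Tendsto (φ ∘ s) atTop (𝓝 a)) (hv : Tendsto s atTop (𝓝 v)) (hφv : φ v ≤ a) (n : ℕ) :
    v ∈ ekelandSet φ (s n) := by
  have hdist : dist (s n) v ≤ φ (s n) - a :=
    le_of_tendsto_of_tendsto (tendsto_const_nhds.dist hv) (tendsto_const_nhds.sub ha)
      (eventually_atTop.2 ⟨n, fun m hm => mem_ekelandSet_of_le hs hm⟩)
  rw [mem_ekelandSet]
  linarith

end EkelandChain

theorem eq_of_mem_ekelandSet_of_halving {X : Type*} [MetricSpace X] {φ : X → ℝ} {s : ℕ → X}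
    (hφ : BddBelow (Set.range φ)) {a : ℝ} (ha : Tendsto (φ ∘ s) atTop (𝓝 a))
    (hhalf : ∀ n, 2 * φ (s (n + 1)) ≤ φ (s n) + sInf (φ '' ekelandSet φ (s n)))
    {v : X} (hv : ∀ n, v ∈ ekelandSet φ (s n)) (hφv : ∀ n, φ v ≤ φ (s (n + 1)))
    {x : X} (hx : x ∈ ekelandSet φ v) : x = v := by
  have hbound : ∀ n, dist v x ≤ φ (s n) - φ (s (n + 1)) := fun n => by
    have hinf := sInf_image_ekelandSet_le hφ (mem_ekelandSet_trans (hv n) hx)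
    linarith [hhalf n, hφv n, mem_ekelandSet.1 hx]
  have hdrop : Tendsto (fun n => φ (s n) - φ (s (n + 1))) atTop (𝓝 0) := by
    simpa using ha.sub (ha.comp (tendsto_add_atTop_nat 1))
  exact (dist_le_zero.1 (ge_of_tendsto' hdrop hbound)).symm

/-- Weakened-hypothesis Ekeland variational principle: with d φ-complete
and φ descending d-lsc, for each u there is v with d(u,v) ≤ φ(u) − φ(v) and
d(v,x) > φ(v) − φ(x) for all x ≠ v. -/
theorem stmt_17 {X : Type*} [MetricSpace X]
    (φ : X → ℝ) (hφ0 : ∀ x, 0 ≤ φ x)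
    (hcomplete : ∀ s : ℕ → X, CauchySeq s →
      (∀ n, φ (s (n + 1)) ≤ φ (s n)) →
      ∃ x : X, Tendsto s atTop (𝓝 x))
    (hlsc : ∀ (s : ℕ → X) (x : X), Tendsto s atTop (𝓝 x) →
      (∀ n, φ (s (n + 1)) ≤ φ (s n)) →
      ∀ a : ℝ, Tendsto (fun n => φ (s n)) atTop (𝓝 a) → φ x ≤ a)
    (u : X) :
    ∃ v : X, dist u v ≤ φ u - φ v ∧
      ∀ x : X, x ≠ v → dist v x > φ v - φ x := by
  have hφ : BddBelow (Set.range φ) := ⟨0, Set.forall_mem_range.2 hφ0⟩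
  choose f hf hhalf using exists_mem_ekelandSet_two_mul_le (φ := φ)
  set s : ℕ → X := fun n => f^[n] u
  have hsucc : ∀ n, s (n + 1) = f (s n) := fun n => Function.iterate_succ_apply' f n u
  have hs : ∀ n, s (n + 1) ∈ ekelandSet φ (s n) := fun n => hsucc n ▸ hf (s n)
  have hdesc : ∀ n, φ (s (n + 1)) ≤ φ (s n) := fun n => le_of_mem_ekelandSet (hs n)
  have ha := tendsto_comp_iInf_of_mem_ekelandSet_succ hφ hs
  obtain ⟨v, hv⟩ := hcomplete s (cauchySeq_of_mem_ekelandSet_succ hφ hs) hdesc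
  have hφv := hlsc s v hv hdesc _ ha
  have hvs := mem_ekelandSet_of_tendsto hs ha hv hφv
  refine ⟨v, hvs 0, fun x hxv => lt_of_not_ge fun hx => hxv ?_⟩
  exact eq_of_mem_ekelandSet_of_halving hφ ha (fun n => hsucc n ▸ hhalf (s n)) hvs
    (fun n => hφv.trans (ciInf_le (hφ.mono (Set.range_comp_subset_range s φ)) _)) hx
end

section
/- The set of ≤_{(d,φ)}-maximal elements is nonempty and cofinal: for each u ∈ X there exists a ≤_{(d,φ)}-maximal v with u ≤_{(d,φ)} v; i.e., the Brøndsted order is a Zorn order. -/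
/-!
Starting from `u`, build a chain `u = s₀ ≤ s₁ ≤ ⋯` in which each `sₙ₊₁` nearly minimises `φ`
(up to `1/(n+1)`) among the successors of `sₙ`. Along a chain distances are bounded by decrements
of `φ`, so the chain is Cauchy because `φ ∘ s` is nonincreasing and bounded below; by lower
semicontinuity its limit `v` lies above every `sₙ`. If `v ≤ w`, then `w` is a successor of every
`sₙ₊₁`, hence `d(v, w) ≤ φ v - φ w ≤ φ sₙ₊₁ - φ w < 1/(n+1)` for all `n`, i.e. `w = v`.
-/

open Filter Topology Set

def BrondstedLE {X : Type*} [PseudoMetricSpace X] (φ : X → ℝ) (x y : X) : Prop :=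
  dist x y ≤ φ x - φ y

namespace BrondstedLE

section PseudoMetric

variable {X : Type*} [PseudoMetricSpace X] {φ : X → ℝ}

theorem refl (x : X) : BrondstedLE φ x x := by
  simp [BrondstedLE]

theorem trans {x y z : X} (hxy : BrondstedLE φ x y) (hyz : BrondstedLE φ y z) :
    BrondstedLE φ x z := by
  unfold BrondstedLE at *
  linarith [dist_triangle x y z]

theorem apply_le {x y : X} (h : BrondstedLE φ x y) : φ y ≤ φ x := by
  unfold BrondstedLE at h
  linarith [dist_nonneg (x := x) (y := y)]

instance : Std.Refl (BrondstedLE φ) := ⟨refl⟩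

instance : IsTrans X (BrondstedLE φ) := ⟨fun _ _ _ => trans⟩

theorem exists_almost_minimal_successor (hbdd : BddBelow (range φ)) (x : X) {ε : ℝ}
    (hε : 0 < ε) : ∃ y, BrondstedLE φ x y ∧ ∀ w, BrondstedLE φ y w → φ y < φ w + ε := by
  set S := φ '' {w | BrondstedLE φ x w}
  obtain ⟨_, ⟨y, hxy, rfl⟩, hy⟩ := Real.lt_sInf_add_pos (s := S) ⟨φ x, x, refl x, rfl⟩ hε
  refine ⟨y, hxy, fun w hyw => ?_⟩
  have hS : sInf S ≤ φ w := csInf_le (hbdd.mono (image_subset_range _ _)) ⟨w, hxy.trans hyw, rfl⟩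
  linarith

theorem exists_upper_bound_of_chain [CompleteSpace X] (hφ : LowerSemicontinuous φ)
    (hbdd : BddBelow (range φ)) {s : ℕ → X} (hs : ∀ n, BrondstedLE φ (s n) (s (n + 1))) :
    ∃ v, ∀ n, BrondstedLE φ (s n) v := by
  have hchain : ∀ ⦃m n⦄, m ≤ n → BrondstedLE φ (s m) (s n) :=
    Nat.rel_of_forall_rel_succ_of_le _ hs
  set L := ⨅ n, φ (s n)
  have hbdd' : BddBelow (range (φ ∘ s)) := hbdd.mono (range_comp_subset_range s φ)
  have hL : Tendsto (φ ∘ s) atTop (𝓝 L) :=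
    tendsto_atTop_ciInf (fun m n h => (hchain h).apply_le) hbdd'
  have hLle : ∀ n, L ≤ φ (s n) := fun n => ciInf_le hbdd' n
  have hdist : ∀ ⦃m n⦄, m ≤ n → dist (s m) (s n) ≤ φ (s m) - L := fun m n h =>
    le_trans (hchain h) (by linarith [hLle n])
  have hcauchy : CauchySeq s :=
    cauchySeq_of_le_tendsto_0' (fun n => φ (s n) - L) hdist (by simpa using hL.sub_const L)
  obtain ⟨v, hv⟩ := cauchySeq_tendsto_of_complete hcauchy
  have hφv : φ v ≤ L := le_of_forall_lt_imp_le_of_dense fun y hy =>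
    ge_of_tendsto hL ((hv.eventually (hφ v y hy)).mono fun _ h => h.le)
  refine ⟨v, fun n => ?_⟩
  have hlim : dist (s n) v ≤ φ (s n) - L :=
    le_of_tendsto (tendsto_const_nhds.dist hv) (eventually_atTop.2 ⟨n, fun m hm => hdist hm⟩)
  unfold BrondstedLE
  linarith

end PseudoMetric

theorem exists_maximal_ge {X : Type*} [MetricSpace X] [CompleteSpace X] {φ : X → ℝ}
    (hφ : LowerSemicontinuous φ) (hbdd : BddBelow (range φ)) (u : X) :
    ∃ v, BrondstedLE φ u v ∧ ∀ w, BrondstedLE φ v w → w = v := by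
  choose next hnext hnext_min using fun (n : ℕ) (x : X) =>
    exists_almost_minimal_successor hbdd x (Nat.one_div_pos_of_nat (n := n) (α := ℝ))
  let s : ℕ → X := fun n => Nat.rec u (fun k x => next k x) n
  obtain ⟨v, hv⟩ := exists_upper_bound_of_chain hφ hbdd (s := s) fun n => hnext n (s n)
  refine ⟨v, hv 0, fun w hvw => eq_of_forall_dist_le fun ε hε => ?_⟩
  obtain ⟨n, hn⟩ := exists_nat_one_div_lt hε
  have hw : φ (s (n + 1)) < φ w + 1 / (n + 1) := hnext_min n (s n) w ((hv (n + 1)).trans hvw)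
  have hv_le : φ v ≤ φ (s (n + 1)) := (hv (n + 1)).apply_le
  have hvw' : dist v w ≤ φ v - φ w := hvw
  rw [dist_comm]
  linarith

end BrondstedLE

theorem stmt_19_general {X : Type*} [MetricSpace X] [CompleteSpace X]
    (φ : X → ℝ) (hφ0 : ∀ x, 0 ≤ φ x)
    (hlip : ∀ x y : X, |φ x - φ y| ≤ dist x y)
    (r : X → X → Prop)
    (hr : ∀ x y : X, r x y ↔ dist x y ≤ φ x - φ y) :
    ∀ u : X, ∃ v : X, r u v ∧ ∀ w : X, r v w → w = v := by
  obtain rfl : r = BrondstedLE φ := funext₂ fun x y => propext (hr x y)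
  have hφ : LipschitzWith 1 φ := LipschitzWith.mk_one fun x y => by
    simpa only [Real.dist_eq] using hlip x y
  exact BrondstedLE.exists_maximal_ge hφ.continuous.lowerSemicontinuous
    ⟨0, forall_mem_range.2 hφ0⟩

/-- Discrete Lipschitz countable version of EVP: in a discrete bounded
complete metric space, for a nonexpansive φ ≥ 0 with countable range whose
Brøndsted order has the inf-lattice property, the Brøndsted order
x ≤ y iff d(x,y) ≤ φ(x) − φ(y) is a Zorn order: the set of maximal elements
is cofinal. -/
theorem stmt_19 {X : Type*} [MetricSpace X] [CompleteSpace X]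
    (hdisc : ∀ x : X, ∃ ρ > (0 : ℝ), ∀ u : X, dist x u < ρ → u = x)
    (hbdd : ∃ C : ℝ, ∀ x y : X, dist x y ≤ C)
    (φ : X → ℝ) (hφ0 : ∀ x, 0 ≤ φ x)
    (hlip : ∀ x y : X, |φ x - φ y| ≤ dist x y)
    (hcount : (Set.range φ).Countable)
    (r : X → X → Prop)
    (hr : ∀ x y : X, r x y ↔ dist x y ≤ φ x - φ y)
    (hinf : ∀ x y : X, ∃ m : X, r m x ∧ r m y ∧
      ∀ z : X, r z x → r z y → r z m) :
    ∀ u : X, ∃ v : X, r u v ∧ ∀ w : X, r v w → w = v :=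
  stmt_19_general φ hφ0 hlip r hr
end
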